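/- arXiv:2506.07892 — 3 statements merged into one kernel-verified Lean document; each statement's English description precedes it below -/
import Mathlib

section
/- Let (λ_j) be positive reals and (α_j) real with Σ|α_j| < ∞, and fix τ > 0. Then for all t ∈ (0, 2τ), φ(t) = Σ_{n=0}^∞ b_n (t−τ)^n, where b_n = Σ_{j=1}^∞ α_j e^{-λ_j τ} (−λ_j)^n / n!. -/
open NormedSpace in
lemma real_exp_tsum (x : ℝ) : Real.exp x = ∑' n : ℕ, x ^ n / n.factorial := by
  rw [Real.exp_eq_exp_ℝ, exp_eq_tsum_div]

theorem stmt_4 (lam alpha : ℕ → ℝ) (hlam : ∀ j, 0 < lam j)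
    (hsum : Summable fun j => |alpha j|) (τ : ℝ) (hτ : 0 < τ)
    (t : ℝ) (ht : t ∈ Set.Ioo 0 (2 * τ)) :
    (∑' j, alpha j * Real.exp (-lam j * t)) =
      ∑' n : ℕ, (∑' j, alpha j * Real.exp (-lam j * τ) * (-lam j) ^ n / n.factorial)
        * (t - τ) ^ n := by
  obtain ⟨ht0, ht2⟩ := ht
  set s := t - τ with hs_def
  have hs : |s| ≤ τ := by
    rw [abs_le]; constructor <;> simp only [hs_def] <;> linarith
  set F : ℕ → ℕ → ℝ := fun j n =>
    alpha j * Real.exp (-lam j * τ) * (-lam j) ^ n / n.factorial * s ^ n with hF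
  have habs : ∀ j n, |F j n| =
      |alpha j| * Real.exp (-lam j * τ) * ((lam j * |s|) ^ n / n.factorial) := by
    intro j n
    simp only [hF, abs_div, abs_mul, abs_pow, abs_neg, abs_of_pos (hlam j),
      Real.abs_exp, Nat.abs_cast, mul_pow]
    ring
  have hrow : ∀ j, Summable fun n : ℕ => |F j n| := by
    intro j
    simp only [habs]
    exact (Real.summable_pow_div_factorial (lam j * |s|)).mul_left _
  have hrowsum : ∀ j, (∑' n, |F j n|) ≤ |alpha j| := by
    intro j
    have h1 : (∑' n, |F j n|) =
        |alpha j| * Real.exp (-lam j * τ) * Real.exp (lam j * |s|) := by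
      simp only [habs]
      rw [tsum_mul_left, ← real_exp_tsum]
    rw [h1, mul_assoc, ← Real.exp_add]
    have h2 : Real.exp (-lam j * τ + lam j * |s|) ≤ 1 := by
      rw [Real.exp_le_one_iff]
      nlinarith [hlam j]
    nlinarith [abs_nonneg (alpha j), Real.exp_pos (-lam j * τ + lam j * |s|)]
  have habsSummable : Summable fun p : ℕ × ℕ => |F p.1 p.2| := by
    rw [summable_prod_of_nonneg (fun p => abs_nonneg _)]
    exact ⟨fun j => hrow j,
      hsum.of_nonneg_of_le (fun j => tsum_nonneg fun n => abs_nonneg _) hrowsum⟩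
  have hF2 : Summable (Function.uncurry F) := by
    rw [← summable_abs_iff]; exact habsSummable
  have expand : ∀ j, alpha j * Real.exp (-lam j * t) = ∑' n : ℕ, F j n := by
    intro j
    have h3 : -lam j * t = -lam j * τ + -lam j * s := by simp only [hs_def]; ring
    rw [h3, Real.exp_add, real_exp_tsum (-lam j * s), ← mul_assoc, ← tsum_mul_left]
    congr 1; funext n
    simp only [hF, mul_pow]
    ring
  calc (∑' j, alpha j * Real.exp (-lam j * t)) = ∑' j, ∑' n, F j n :=
        tsum_congr expand
    _ = ∑' n, ∑' j, F j n := by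
        refine (Summable.tsum_comm' hF2 ?_ ?_).symm
        · intro j; rw [← summable_abs_iff]; exact hrow j
        · intro n; exact hF2.prod_symm.prod_factor n
    _ = ∑' n : ℕ, (∑' j, alpha j * Real.exp (-lam j * τ) * (-lam j) ^ n / n.factorial) * s ^ n := by
        refine tsum_congr fun n => ?_
        rw [← tsum_mul_right]
end

section
/- Let (λ_j) be positive reals and (α_j) real with Σ|α_j| < ∞, and fix τ > 0. Then there is a constant C_τ > 0 such that for all t ∈ (0, 2τ) and all n ≥ 1, |φ(t) − Σ_{k=0}^n b_k (t−τ)^k| ≤ (C_τ/√n) · (|t−τ|/τ)^{n+1} / (1 − |t−τ|/τ) when |t−τ| < τ, where b_k = Σ_j α_j e^{-λ_j τ}(−λ_j)^k/k!. -/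
/-!
Expanding each `exp (-λ_j t) = exp (-λ_j τ) * exp (-λ_j (t - τ))` into its power series and
exchanging the two summations, which is legitimate because
`exp (-λ_j τ) * exp (λ_j |t - τ|) ≤ 1`, gives `φ(t) = ∑ b_k (t - τ)^k`. Stirling's bound
`x^k e^{-x} ≤ (k/e)^k ≤ k! / √(2πk)` at `x = λ_j τ` gives `|b_k| ≤ (∑ |α_j|) / (√(2πk) τ^k)`,
so the tail after the `n`-th term is dominated by `1/√n` times a geometric series in `|t - τ|/τ`.
-/

open Real Finset Nat

theorem Real.exp_neg_mul_pow_le {x : ℝ} (hx : 0 ≤ x) (k : ℕ) :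
    exp (-x) * x ^ k ≤ (k / exp 1) ^ k := by
  rcases k.eq_zero_or_pos with rfl | hk_pos
  · simpa using exp_le_one_iff.2 (neg_nonpos.2 hx)
  have hk : (0 : ℝ) < k := by exact_mod_cast hk_pos
  have hlin : x / k ≤ exp (x / k - 1) := by linarith [add_one_le_exp (x / k - 1)]
  have hexp : -x + k * (x / k - 1) = -k := by field_simp; ring
  calc exp (-x) * x ^ k = exp (-x) * (x / k) ^ k * (k : ℝ) ^ k := by
        rw [div_pow]; field_simp
    _ ≤ exp (-x) * exp (x / k - 1) ^ k * (k : ℝ) ^ k := by gcongr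
    _ = (k / exp 1) ^ k := by
        rw [← exp_nat_mul, ← exp_add, hexp, div_pow, exp_one_pow, exp_neg]
        ring

theorem Real.exp_neg_mul_pow_le_factorial_div_sqrt {x : ℝ} (hx : 0 ≤ x) {k : ℕ} (hk : k ≠ 0) :
    exp (-x) * x ^ k ≤ k ! / √(2 * π * k) := by
  rw [le_div_iff₀ (by positivity)]
  calc exp (-x) * x ^ k * √(2 * π * k) ≤ √(2 * π * k) * (k / exp 1) ^ k := by
        rw [mul_comm]; gcongr; exact exp_neg_mul_pow_le hx k
    _ ≤ k ! := Stirling.le_factorial_stirling k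

theorem Real.hasSum_pow_div_factorial (x : ℝ) : HasSum (fun n ↦ x ^ n / n !) (exp x) :=
  exp_eq_exp_ℝ ▸ NormedSpace.expSeries_div_hasSum_exp x

theorem abs_sub_sum_range_le_of_hasSum {g : ℕ → ℝ} {S M ρ : ℝ} (hg : HasSum g S) {n : ℕ}
    (hn : n ≠ 0) (hM : 0 ≤ M) (hρ₀ : 0 ≤ ρ) (hρ₁ : ρ < 1)
    (hbound : ∀ k, n < k → |g k| ≤ M * ρ ^ k / √k) :
    |S - ∑ k ∈ range (n + 1), g k| ≤ M / √n * (ρ ^ (n + 1) / (1 - ρ)) := by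
  have htail := (hasSum_nat_add_iff' (n + 1)).2 hg
  have hgeom := (hasSum_geometric_of_lt_one hρ₀ hρ₁).mul_left (M / √n * ρ ^ (n + 1))
  rw [← htail.tsum_eq, ← Real.norm_eq_abs, div_eq_mul_inv (ρ ^ (n + 1)), ← mul_assoc]
  refine tsum_of_norm_bounded hgeom fun i ↦ ?_
  calc ‖g (i + (n + 1))‖ ≤ M * ρ ^ (i + (n + 1)) / √(i + (n + 1) : ℕ) := hbound _ (by omega)
    _ ≤ M * ρ ^ (i + (n + 1)) / √n := by gcongr; exact_mod_cast (by omega : n ≤ i + (n + 1))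
    _ = M / √n * ρ ^ (n + 1) * ρ ^ i := by ring

noncomputable def expSumTaylorCoeff (lam alpha : ℕ → ℝ) (τ : ℝ) (k : ℕ) : ℝ :=
  ∑' j, alpha j * exp (-lam j * τ) * (-lam j) ^ k / k !

section ExpSum

variable {lam alpha : ℕ → ℝ} {τ : ℝ}

theorem abs_expSumTaylorCoeff_le (hlam : ∀ j, 0 ≤ lam j) (hα : Summable fun j ↦ |alpha j|)
    (hτ : 0 < τ) {k : ℕ} (hk : k ≠ 0) :
    |expSumTaylorCoeff lam alpha τ k| ≤ (∑' j, |alpha j|) * (1 / (√(2 * π * k) * τ ^ k)) := by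
  rw [← Real.norm_eq_abs]
  refine tsum_of_norm_bounded (hα.hasSum.mul_right _) fun j ↦ ?_
  have hstir := exp_neg_mul_pow_le_factorial_div_sqrt (mul_nonneg (hlam j) hτ.le) hk
  calc ‖alpha j * exp (-lam j * τ) * (-lam j) ^ k / (k ! : ℝ)‖
      = |alpha j| * (exp (-(lam j * τ)) * (lam j * τ) ^ k) / (k ! * τ ^ k) := by
        rw [Real.norm_eq_abs, abs_div, abs_mul, abs_mul, abs_pow, abs_neg, abs_of_nonneg (hlam j),
          abs_of_pos (exp_pos _), Nat.abs_cast, mul_pow]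
        field_simp
    _ ≤ |alpha j| * (k ! / √(2 * π * k)) / (k ! * τ ^ k) := by gcongr
    _ = |alpha j| * (1 / (√(2 * π * k) * τ ^ k)) := by field_simp

theorem hasSum_expSumTaylorCoeff_mul_pow (hlam : ∀ j, 0 ≤ lam j)
    (hα : Summable fun j ↦ |alpha j|) {t : ℝ} (ht : |t - τ| ≤ τ) :
    HasSum (fun k ↦ expSumTaylorCoeff lam alpha τ k * (t - τ) ^ k)
      (∑' j, alpha j * exp (-lam j * t)) := by
  set s := t - τ
  set F : ℕ × ℕ → ℝ := fun p ↦ alpha p.1 * exp (-lam p.1 * τ) * ((-lam p.1 * s) ^ p.2 / p.2 !)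
  have hrow (j : ℕ) : HasSum (fun k ↦ F (j, k)) (alpha j * exp (-lam j * t)) := by
    have hsplit : -lam j * t = -lam j * τ + -lam j * s := by ring
    rw [hsplit, exp_add, ← mul_assoc]
    exact (hasSum_pow_div_factorial (-lam j * s)).mul_left _
  have habsrow (j : ℕ) :
      HasSum (fun k ↦ |F (j, k)|) (|alpha j| * exp (-lam j * τ) * exp (lam j * |s|)) := by
    refine ((hasSum_pow_div_factorial (lam j * |s|)).mul_left _).congr_fun fun k ↦ ?_
    rw [abs_mul, abs_mul, abs_div, abs_pow, abs_mul, abs_neg, abs_of_nonneg (hlam j),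
      abs_of_pos (exp_pos _), Nat.abs_cast]
  have hrow_le (j : ℕ) : |alpha j| * exp (-lam j * τ) * exp (lam j * |s|) ≤ |alpha j| := by
    rw [mul_assoc, ← exp_add]
    exact mul_le_of_le_one_right (abs_nonneg _)
      (exp_le_one_iff.2 (by nlinarith [hlam j]))
  have hF : Summable F := by
    refine Summable.of_abs ((summable_prod_of_nonneg fun _ ↦ abs_nonneg _).2
      ⟨fun j ↦ (habsrow j).summable, ?_⟩)
    exact hα.of_nonneg_of_le (fun j ↦ tsum_nonneg fun _ ↦ abs_nonneg _)
      fun j ↦ (habsrow j).tsum_eq ▸ hrow_le j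
  have hcol (k : ℕ) : HasSum (fun j ↦ F (j, k)) (expSumTaylorCoeff lam alpha τ k * s ^ k) := by
    refine (hF.prod_symm.prod_factor k).hasSum_iff.2 ?_
    rw [expSumTaylorCoeff, ← tsum_mul_right]
    exact tsum_congr fun j ↦ by simp only [F, Prod.swap, mul_pow]; ring
  rw [(hF.hasSum.prod_fiberwise hrow).tsum_eq]
  exact ((Equiv.prodComm ℕ ℕ).hasSum_iff.2 hF.hasSum).prod_fiberwise hcol

end ExpSum

theorem stmt_6 (lam alpha : ℕ → ℝ) (hlam : ∀ j, 0 < lam j)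
    (hsum : Summable fun j => |alpha j|) (τ : ℝ) (hτ : 0 < τ) :
    ∃ C : ℝ, 0 < C ∧ ∀ t ∈ Set.Ioo 0 (2 * τ), ∀ n : ℕ, 1 ≤ n → |t - τ| < τ →
      |(∑' j, alpha j * Real.exp (-lam j * t)) -
        ∑ k ∈ Finset.range (n + 1),
          (∑' j, alpha j * Real.exp (-lam j * τ) * (-lam j) ^ k / k.factorial)
            * (t - τ) ^ k|
        ≤ C / Real.sqrt n * ((|t - τ| / τ) ^ (n + 1) / (1 - |t - τ| / τ)) := by
  set A := ∑' j, |alpha j|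
  have hA : 0 ≤ A := tsum_nonneg fun _ ↦ abs_nonneg _
  refine ⟨(A + 1) / √(2 * π), by positivity, fun t _ n hn hst ↦ ?_⟩
  have hlam₀ : ∀ j, 0 ≤ lam j := fun j ↦ (hlam j).le
  refine abs_sub_sum_range_le_of_hasSum (hasSum_expSumTaylorCoeff_mul_pow hlam₀ hsum hst.le)
    (by omega) (by positivity) (by positivity) ((div_lt_one hτ).2 hst) fun k hnk ↦ ?_
  have hk : k ≠ 0 := by omega
  calc |expSumTaylorCoeff lam alpha τ k * (t - τ) ^ k|
      ≤ A * (1 / (√(2 * π * k) * τ ^ k)) * |t - τ| ^ k := by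
        rw [abs_mul, abs_pow]
        gcongr
        exact abs_expSumTaylorCoeff_le hlam₀ hsum hτ hk
    _ ≤ (A + 1) * (1 / (√(2 * π * k) * τ ^ k)) * |t - τ| ^ k := by gcongr; linarith
    _ = (A + 1) / √(2 * π) * (|t - τ| / τ) ^ k / √k := by
        rw [sqrt_mul (by positivity) k, div_pow]
        field_simp
end

section
/- Uniqueness for Dirichlet series under relaxed summability: let (λ_j) ⊂ (0,∞) be strictly increasing and (α_j) real with Σ_j |α_j|/λ_j^k < ∞ for some k ∈ ℕ. If Σ_{j=1}^∞ α_j e^{-λ_j t} = 0 for all t ∈ [0, T] for some T > 0, then α_j = 0 for all j. -/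
/-!
The series `F(s) = ∑ αⱼ e^{-λⱼ s}` converges absolutely and locally uniformly on `Re s > 0`,
because `λ^k e^{-λσ} ≤ k!/σ^k` turns the weights `|αⱼ| / λⱼ^k` into a majorant on `Re s ≥ σ`.
Hence `F` is holomorphic there, and since it vanishes on `(0, T]` the identity theorem makes it
vanish on all of `(0, ∞)`. Finally, if `αᵢ = 0` for `i < j`, then
`e^{λⱼ t} F(t) = ∑_{i ≥ j} αᵢ e^{-(λᵢ - λⱼ) t} → αⱼ` as `t → ∞` by dominated convergence,
so `αⱼ = 0` by strong induction on `j`.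
-/

open Filter Topology Set
open scoped Nat

lemma pow_mul_exp_neg_mul_le (k : ℕ) {σ x : ℝ} (hσ : 0 < σ) (hx : 0 ≤ x) :
    x ^ k * Real.exp (-x * σ) ≤ k ! / σ ^ k := by
  have h := Real.pow_div_factorial_le_exp _ (mul_nonneg hx hσ.le) k
  rw [div_le_iff₀ (by positivity), mul_pow] at h
  rw [le_div_iff₀ (by positivity), neg_mul, Real.exp_neg]
  calc x ^ k * (Real.exp (x * σ))⁻¹ * σ ^ k
      = x ^ k * σ ^ k * (Real.exp (x * σ))⁻¹ := by ring
    _ ≤ Real.exp (x * σ) * k ! * (Real.exp (x * σ))⁻¹ := by gcongr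
    _ = k ! := by field_simp

variable {lam a : ℕ → ℝ}

lemma summable_abs_mul_exp_neg_mul {k : ℕ} (hlam : ∀ j, 0 < lam j)
    (hsum : Summable fun j => |a j| / lam j ^ k) {σ : ℝ} (hσ : 0 < σ) :
    Summable fun j => |a j| * Real.exp (-lam j * σ) := by
  refine (hsum.mul_right (k ! / σ ^ k)).of_nonneg_of_le (fun j => by positivity) fun j => ?_
  have hlj := hlam j
  calc |a j| * Real.exp (-lam j * σ)
      = |a j| / lam j ^ k * (lam j ^ k * Real.exp (-lam j * σ)) := by field_simp
    _ ≤ |a j| / lam j ^ k * (k ! / σ ^ k) := by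
      gcongr
      exact pow_mul_exp_neg_mul_le k hσ hlj.le

noncomputable def dirichletSeries (lam a : ℕ → ℝ) (s : ℂ) : ℂ :=
  ∑' j, (a j : ℂ) * Complex.exp (-lam j * s)

lemma dirichletSeries_ofReal (t : ℝ) :
    dirichletSeries lam a t = ↑(∑' j, a j * Real.exp (-lam j * t)) := by
  rw [dirichletSeries, Complex.ofReal_tsum]
  push_cast
  rfl

lemma norm_ofReal_mul_exp_neg_mul_le (c : ℝ) {l σ : ℝ} (hl : 0 ≤ l) {s : ℂ} (hs : σ ≤ s.re) :
    ‖(c : ℂ) * Complex.exp (-l * s)‖ ≤ |c| * Real.exp (-l * σ) := by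
  rw [norm_mul, Complex.norm_real, Real.norm_eq_abs, Complex.norm_exp]
  gcongr
  simpa using mul_le_mul_of_nonneg_left hs hl

lemma differentiableOn_dirichletSeries (hlam : ∀ j, 0 ≤ lam j)
    (hdom : ∀ σ > 0, Summable fun j => |a j| * Real.exp (-lam j * σ)) :
    DifferentiableOn ℂ (dirichletSeries lam a) {s | 0 < s.re} := by
  intro z hz
  have hopen : IsOpen {s : ℂ | z.re / 2 < s.re} := isOpen_lt continuous_const Complex.continuous_re
  have hdiff : DifferentiableOn ℂ (dirichletSeries lam a) {s | z.re / 2 < s.re} :=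
    Complex.differentiableOn_tsum_of_summable_norm (hdom _ (half_pos hz)) (fun j => by fun_prop)
      hopen fun j _ hw => norm_ofReal_mul_exp_neg_mul_le _ (hlam j) (le_of_lt hw)
  exact (hdiff.differentiableAt
    (hopen.mem_nhds (half_lt_self (a := z.re) hz))).differentiableWithinAt

lemma tsum_mul_exp_eq_zero_of_eqOn_Ioc (hlam : ∀ j, 0 ≤ lam j)
    (hdom : ∀ σ > 0, Summable fun j => |a j| * Real.exp (-lam j * σ)) {T : ℝ} (hT : 0 < T)
    (hzero : ∀ t ∈ Ioc 0 T, ∑' j, a j * Real.exp (-lam j * t) = 0) {t : ℝ} (ht : 0 < t) :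
    ∑' j, a j * Real.exp (-lam j * t) = 0 := by
  have hana : AnalyticOnNhd ℂ (dirichletSeries lam a) {s | 0 < s.re} :=
    (differentiableOn_dirichletSeries hlam hdom).analyticOnNhd
      (isOpen_lt continuous_const Complex.continuous_re)
  have hfreq : ∃ᶠ s in 𝓝[≠] (T : ℂ), dirichletSeries lam a s = 0 := by
    have hmaps : Tendsto Complex.ofReal (𝓝[<] T) (𝓝[≠] (T : ℂ)) :=
      Complex.continuous_ofReal.continuousWithinAt.tendsto_nhdsWithin
        fun t ht => by simpa using ht.ne
    refine hmaps.frequently (Eventually.frequently ?_)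
    filter_upwards [Ioo_mem_nhdsLT hT] with t ht
    rw [dirichletSeries_ofReal, hzero t ⟨ht.1, ht.2.le⟩, Complex.ofReal_zero]
  have hvanish := hana.eqOn_zero_of_preconnected_of_frequently_eq_zero
    (convex_halfSpace_re_gt 0).isPreconnected (by simpa using hT) hfreq
  have := (dirichletSeries_ofReal t).symm.trans (hvanish (show (0 : ℝ) < (t : ℂ).re by simpa))
  exact_mod_cast this.trans (Pi.zero_apply _)

lemma tendsto_tsum_mul_exp_sub_mul (hmono : StrictMono lam) {t₀ : ℝ}
    (hdom : Summable fun i => |a i| * Real.exp (-lam i * t₀)) {j : ℕ} (hj : ∀ i < j, a i = 0) :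
    Tendsto (fun t => ∑' i, a i * Real.exp ((lam j - lam i) * t)) atTop (𝓝 (a j)) := by
  have hterm : ∀ i, Tendsto (fun t => a i * Real.exp ((lam j - lam i) * t)) atTop
      (𝓝 (if i = j then a j else 0)) := by
    intro i
    rcases lt_trichotomy i j with h | rfl | h
    · simp [hj i h, h.ne]
    · simp
    · rw [if_neg h.ne', ← mul_zero (a i)]
      exact (Real.tendsto_exp_atBot.comp
        (tendsto_id.const_mul_atTop_of_neg (sub_neg.2 (hmono h)))).const_mul (a i)
  have hbound : ∀ᶠ t in atTop, ∀ i, ‖a i * Real.exp ((lam j - lam i) * t)‖ ≤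
      Real.exp (lam j * t₀) * (|a i| * Real.exp (-lam i * t₀)) := by
    filter_upwards [eventually_ge_atTop t₀] with t ht i
    rcases lt_or_ge i j with h | h
    · simp [hj i h]
    · rw [norm_mul, Real.norm_eq_abs, Real.norm_eq_abs, Real.abs_exp, mul_left_comm,
        ← Real.exp_add]
      gcongr
      nlinarith [hmono.monotone h]
  simpa using tendsto_tsum_of_dominated_convergence (hdom.mul_left _) hterm hbound

theorem eq_zero_of_tsum_mul_exp_eq_zero (hmono : StrictMono lam) {t₀ : ℝ}
    (hdom : Summable fun i => |a i| * Real.exp (-lam i * t₀))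
    (h : ∀ᶠ t in atTop, ∑' i, a i * Real.exp (-lam i * t) = 0) (j : ℕ) : a j = 0 := by
  induction j using Nat.strong_induction_on with
  | _ j ih =>
  refine tendsto_nhds_unique (tendsto_tsum_mul_exp_sub_mul hmono hdom ih)
    (tendsto_const_nhds.congr' ?_)
  filter_upwards [h] with t ht
  have hshift : ∀ i, a i * Real.exp ((lam j - lam i) * t) =
      Real.exp (lam j * t) * (a i * Real.exp (-lam i * t)) := fun i => by
    rw [mul_left_comm, ← Real.exp_add]; ring_nf
  rw [tsum_congr hshift, tsum_mul_left, ht, mul_zero]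

theorem stmt_13 (lam alpha : ℕ → ℝ) (hlam : ∀ j, 0 < lam j) (hmono : StrictMono lam)
    (k : ℕ) (hsum : Summable fun j => |alpha j| / lam j ^ k) (T : ℝ) (hT : 0 < T)
    (hzero : ∀ t ∈ Set.Ioc 0 T, (∑' j, alpha j * Real.exp (-lam j * t)) = 0) :
    ∀ j, alpha j = 0 := by
  have hdom : ∀ σ > 0, Summable fun j => |alpha j| * Real.exp (-lam j * σ) :=
    fun σ hσ => summable_abs_mul_exp_neg_mul hlam hsum hσ
  have hpos : ∀ t > 0, ∑' j, alpha j * Real.exp (-lam j * t) = 0 :=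
    fun t => tsum_mul_exp_eq_zero_of_eqOn_Ioc (fun j => (hlam j).le) hdom hT hzero
  exact eq_zero_of_tsum_mul_exp_eq_zero hmono (hdom 1 one_pos)
    ((eventually_gt_atTop 0).mono hpos)
end
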